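/- arXiv:2101.11995 — 3 statements merged into one kernel-verified Lean document; each statement's English description precedes it below -/
import Mathlib

section
/- Let n ≥ 4 and let T be a standard Young tableau with n entries whose shape is (n−1, 1) or (2, 1, 1, …, 1). If S is any standard Young tableau with n entries whose set of 1-minors equals that of T, then S = T. -/
/-- A standard Young tableau with `n` entries, encoded by its entry function
`entry : ℕ × ℕ → ℕ`: `entry (i, j) = 0` means there is no cell in row `i` and
column `j` (both 0-indexed), and otherwise `entry (i, j)` is the label
(one of `1, …, n`) of the cell `(i, j)`.  Rows increase from left to right and
columns increase from top to bottom. -/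
structure SYT (n : ℕ) where
  entry : ℕ × ℕ → ℕ
  /-- the set of cells is the Young diagram of a partition -/
  diagram : ∀ i j i' j', i' ≤ i → j' ≤ j → entry (i, j) ≠ 0 → entry (i', j') ≠ 0
  /-- every label is at most `n` -/
  le_n : ∀ c, entry c ≤ n
  /-- every label in `1, …, n` appears in some cell -/
  exists_cell : ∀ k, 1 ≤ k → k ≤ n → ∃ c, entry c = k
  /-- each label appears in at most one cell -/
  inj : ∀ c c', entry c ≠ 0 → entry c = entry c' → c = c'
  /-- rows increase from left to right -/
  row_lt : ∀ i j, entry (i, j + 1) ≠ 0 → entry (i, j) < entry (i, j + 1)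
  /-- columns increase from top to bottom -/
  col_lt : ∀ i j, entry (i + 1, j) ≠ 0 → entry (i, j) < entry (i + 1, j)

/-- The shape (set of cells) of an entry function. -/
def shapeOf (f : ℕ × ℕ → ℕ) : Set (ℕ × ℕ) := {c | f c ≠ 0}

/-- The shape of a standard Young tableau: the set of cells of its
underlying Young diagram. -/
def SYT.shape {n : ℕ} (T : SYT n) : Set (ℕ × ℕ) := shapeOf T.entry

/-- `c` is an outer corner: a cell with no cell immediately to its right and
no cell immediately below it. -/
def IsOuterCorner (f : ℕ × ℕ → ℕ) (c : ℕ × ℕ) : Prop :=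
  f c ≠ 0 ∧ f (c.1, c.2 + 1) = 0 ∧ f (c.1 + 1, c.2) = 0

/-- Jeu de taquin sliding: starting with a vacant cell `c`, repeatedly slide
into the vacant cell the smaller of the entries immediately to the right of and
immediately below it, until neither exists.  `fuel` bounds the number of steps;
any `fuel ≥ n` suffices for a tableau with `n` entries, and extra fuel does not
change the result once the process has terminated. -/
def jdtAux : ℕ → (ℕ × ℕ → ℕ) → ℕ × ℕ → (ℕ × ℕ → ℕ)
  | 0, f, _ => f
  | fuel + 1, f, c =>
    let r := f (c.1, c.2 + 1)
    let b := f (c.1 + 1, c.2)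
    if r = 0 ∧ b = 0 then f
    else if b = 0 ∨ (r ≠ 0 ∧ r < b) then
      jdtAux fuel (Function.update (Function.update f c r) (c.1, c.2 + 1) 0) (c.1, c.2 + 1)
    else
      jdtAux fuel (Function.update (Function.update f c b) (c.1 + 1, c.2) 0) (c.1 + 1, c.2)

open Classical

/-- Deletion of the entry `m` from an entry function: vacate the cell
containing `m`, perform the jeu de taquin sliding process, and then renumber
each entry `p > m` to `p - 1`. -/
noncomputable def delRaw (fuel : ℕ) (f : ℕ × ℕ → ℕ) (m : ℕ) : ℕ × ℕ → ℕ :=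
  if h : 0 < m ∧ ∃ c, f c = m then
    let g := jdtAux fuel (Function.update f (Classical.choose h.2) 0) (Classical.choose h.2)
    fun x => if m < g x then g x - 1 else g x
  else f

/-- The 1-minor `T - m` of a standard Young tableau `T` with `n` entries,
as an entry function (a standard Young tableau with `n - 1` entries). -/
noncomputable def SYT.del {n : ℕ} (T : SYT n) (m : ℕ) : ℕ × ℕ → ℕ :=
  delRaw n T.entry m

/-- The set of 1-minors `M¹(T) = {T - m : 1 ≤ m ≤ n}` of `T`. -/
noncomputable def minors1 {n : ℕ} (T : SYT n) : Set (ℕ × ℕ → ℕ) :=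
  {g | ∃ m, 1 ≤ m ∧ m ≤ n ∧ g = T.del m}

/-- The multiset of 1-minors `⟦T - m : 1 ≤ m ≤ n⟧` of `T`,
counted with multiplicities. -/
noncomputable def minors1M {n : ℕ} (T : SYT n) : Multiset (ℕ × ℕ → ℕ) :=
  (Finset.Icc 1 n).val.map T.del
/-! ### Auxiliary definitions -/

def rowOnly (N : ℕ) : ℕ × ℕ → ℕ := fun c => if c.1 = 0 ∧ c.2 < N then c.2 + 1 else 0

def rowTf (N a : ℕ) : ℕ × ℕ → ℕ := fun c =>
  if c = (1, 0) then a
  else if c.1 = 0 ∧ c.2 + 1 < N then (if a ≤ c.2 + 1 then c.2 + 2 else c.2 + 1) else 0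

def colOnly (N : ℕ) : ℕ × ℕ → ℕ := fun c => if c.2 = 0 ∧ c.1 < N then c.1 + 1 else 0

def colTf (N b : ℕ) : ℕ × ℕ → ℕ := fun c =>
  if c = (0, 1) then b
  else if c.2 = 0 ∧ c.1 + 1 < N then (if b ≤ c.1 + 1 then c.1 + 2 else c.1 + 1) else 0

/-! ### Basic SYT lemmas -/

lemma SYT.row_le {n : ℕ} (T : SYT n) (i j : ℕ) :
    ∀ k, T.entry (i, j + k) ≠ 0 → T.entry (i, j) + k ≤ T.entry (i, j + k) := by
  intro k
  induction k with
  | zero => intro h; simp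
  | succ k ih =>
    intro h
    have h1 : T.entry (i, j + k) ≠ 0 := T.diagram i (j + k + 1) i (j + k) le_rfl (by omega) (by rwa [Nat.add_assoc])
    have h2 := T.row_lt i (j + k) (by simpa [Nat.add_assoc] using h)
    have := ih h1
    simp only [← Nat.add_assoc] at h2 ⊢
    omega

lemma SYT.col_le {n : ℕ} (T : SYT n) (i j : ℕ) :
    ∀ k, T.entry (i + k, j) ≠ 0 → T.entry (i, j) + k ≤ T.entry (i + k, j) := by
  intro k
  induction k with
  | zero => intro h; simp
  | succ k ih =>
    intro h
    have h1 : T.entry (i + k, j) ≠ 0 := T.diagram (i + k + 1) j (i + k) j (by omega) le_rfl (by rwa [Nat.add_assoc])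
    have h2 := T.col_lt (i + k) j (by simpa [Nat.add_assoc] using h)
    have := ih h1
    simp only [← Nat.add_assoc] at h2 ⊢
    omega

lemma SYT.pos_of_ne {n : ℕ} (T : SYT n) (c : ℕ × ℕ) (h : T.entry c ≠ 0) : 1 ≤ T.entry c := by
  omega

/-- resolving the `Classical.choose` in `delRaw` -/
lemma SYT.del_eq {n : ℕ} (T : SYT n) (m : ℕ) (c₀ : ℕ × ℕ) (hm : 0 < m)
    (hc : T.entry c₀ = m) :
    T.del m = (fun x =>
      if m < jdtAux n (Function.update T.entry c₀ 0) c₀ x then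
        jdtAux n (Function.update T.entry c₀ 0) c₀ x - 1
      else jdtAux n (Function.update T.entry c₀ 0) c₀ x) := by
  have h : 0 < m ∧ ∃ c, T.entry c = m := ⟨hm, c₀, hc⟩
  have hch : Classical.choose h.2 = c₀ := by
    apply T.inj
    · rw [Classical.choose_spec h.2]; omega
    · rw [Classical.choose_spec h.2, hc]
  rw [SYT.del, delRaw, dif_pos h]
  simp only [hch]

/-- jeu de taquin never creates cells outside the original shape (plus the start). -/
lemma jdt_shape : ∀ fuel (f : ℕ × ℕ → ℕ) c x, jdtAux fuel f c x ≠ 0 → f x ≠ 0 ∨ x = c := by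
  intro fuel
  induction fuel with
  | zero => intro f c x h; exact Or.inl h
  | succ fuel ih =>
    intro f c x h
    rw [jdtAux] at h
    by_cases h0 : f (c.1, c.2 + 1) = 0 ∧ f (c.1 + 1, c.2) = 0
    · rw [if_pos h0] at h; exact Or.inl h
    · rw [if_neg h0] at h
      by_cases h1 : f (c.1 + 1, c.2) = 0 ∨ (f (c.1, c.2 + 1) ≠ 0 ∧ f (c.1, c.2 + 1) < f (c.1 + 1, c.2))
      · rw [if_pos h1] at h
        rcases ih _ _ _ h with h' | h'
        · rcases eq_or_ne x c with rfl | hxc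
          · exact Or.inr rfl
          · left
            rcases eq_or_ne x (c.1, c.2 + 1) with rfl | hxr
            · tauto
            · rwa [Function.update_of_ne hxr, Function.update_of_ne hxc] at h'
        · left; rw [h']; tauto
      · rw [if_neg h1] at h
        rcases ih _ _ _ h with h' | h'
        · rcases eq_or_ne x c with rfl | hxc
          · exact Or.inr rfl
          · left
            rcases eq_or_ne x (c.1 + 1, c.2) with rfl | hxb
            · tauto
            · rwa [Function.update_of_ne hxb, Function.update_of_ne hxc] at h'
        · left; rw [h']
          intro hb
          exact h1 (Or.inl hb)

lemma del_shape {n : ℕ} (T : SYT n) (m : ℕ) (x : ℕ × ℕ) (h : T.del m x ≠ 0) :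
    T.entry x ≠ 0 := by
  rw [SYT.del, delRaw] at h
  split at h
  · next hh =>
    simp only at h
    set g := jdtAux n (Function.update T.entry (Classical.choose hh.2) 0) (Classical.choose hh.2) with hg
    have hgx : g x ≠ 0 := by intro h0; rw [h0] at h; simp at h
    rcases jdt_shape n _ _ x hgx with h' | h'
    · intro h0
      rcases eq_or_ne x (Classical.choose hh.2) with rfl | hne
      · simp at h'
      · rw [Function.update_of_ne hne] at h'; exact h' h0
    · subst h'
      rw [Classical.choose_spec hh.2]
      have := hh.1
      omega
  · exact h

/-! ### Uniqueness of hook-shaped tableaux -/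

lemma row_unique (n : ℕ) (hn : 4 ≤ n) (T : SYT n)
    (hsh : ∀ c : ℕ × ℕ, T.entry c ≠ 0 ↔ (c.1 = 0 ∧ c.2 + 1 < n) ∨ c = (1, 0)) :
    2 ≤ T.entry (1, 0) ∧ T.entry (1, 0) ≤ n ∧ T.entry = rowTf n (T.entry (1, 0)) := by
  set a := T.entry (1, 0) with haa
  have ha0 : a ≠ 0 := (hsh (1, 0)).mpr (Or.inr rfl)
  have h00 : T.entry (0, 0) ≠ 0 := (hsh (0, 0)).mpr (Or.inl ⟨rfl, by omega⟩)
  have e00 : T.entry (0, 0) = 1 := by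
    obtain ⟨c, hc⟩ := T.exists_cell 1 le_rfl (by omega)
    have hcne : T.entry c ≠ 0 := by rw [hc]; omega
    rcases (hsh c).mp hcne with ⟨hc1, _⟩ | hc10
    · have hcc : ((0 : ℕ), (0 : ℕ) + c.2) = c := by
        rw [Prod.ext_iff]; exact ⟨hc1.symm, by simp⟩
      have := T.row_le 0 0 c.2 (by rw [hcc]; exact hcne)
      rw [hcc, hc] at this
      omega
    · rw [hc10] at hc
      have := T.col_lt 0 0 (by rw [hc]; omega)
      rw [hc] at this
      omega
  have ha2 : 2 ≤ a := by
    have h : T.entry (0, 0) < T.entry (1, 0) := T.col_lt 0 0 (by simpa using ha0)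
    omega
  have han : a ≤ n := T.le_n _
  have main : ∀ j, j + 1 < n → T.entry (0, j) = if a ≤ j + 1 then j + 2 else j + 1 := by
    intro j
    induction j with
    | zero => intro _; rw [e00, if_neg (by omega)]
    | succ j ih =>
      intro hj
      have E := ih (by omega)
      have hF0 : T.entry (0, j + 1) ≠ 0 := (hsh _).mpr (Or.inl ⟨rfl, by omega⟩)
      have hFn : T.entry (0, j + 1) ≤ n := T.le_n _
      have hEF : T.entry (0, j) < T.entry (0, j + 1) := T.row_lt 0 j hF0
      have hFa : T.entry (0, j + 1) ≠ a := by
        intro hh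
        have := T.inj (0, j + 1) (1, 0) hF0 (by rw [hh])
        simp at this
      have key : ∀ v, T.entry (0, j) < v → v < T.entry (0, j + 1) → v = a := by
        intro v hv1 hv2
        obtain ⟨c, hc⟩ := T.exists_cell v (by omega) (by omega)
        have hcne : T.entry c ≠ 0 := by rw [hc]; omega
        rcases (hsh c).mp hcne with ⟨hc1, _⟩ | hc10
        · exfalso
          by_cases hle : c.2 ≤ j
          · have hcc : ((0 : ℕ), c.2 + (j - c.2)) = ((0 : ℕ), j) := by
              rw [Prod.ext_iff]; exact ⟨rfl, by omega⟩
            have h2 := T.row_le 0 c.2 (j - c.2) (by rw [hcc]; exact (hsh _).mpr (Or.inl ⟨rfl, by omega⟩))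
            rw [hcc] at h2
            have hcv : T.entry (0, c.2) = v := by
              rw [← hc]; congr 1; rw [Prod.ext_iff]; exact ⟨hc1.symm, rfl⟩
            omega
          · have hcc : ((0 : ℕ), (j + 1) + (c.2 - (j + 1))) = c := by
              rw [Prod.ext_iff]; exact ⟨hc1.symm, by simp; omega⟩
            have h2 := T.row_le 0 (j + 1) (c.2 - (j + 1)) (by rw [hcc]; exact hcne)
            rw [hcc, hc] at h2
            omega
        · rw [hc10] at hc; exact hc.symm
      have hsplit : T.entry (0, j + 1) = T.entry (0, j) + 1 ∨
          (T.entry (0, j + 1) = T.entry (0, j) + 2 ∧ T.entry (0, j) + 1 = a) := by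
        by_cases hh : T.entry (0, j + 1) = T.entry (0, j) + 2
        · exact Or.inr ⟨hh, key _ (by omega) (by omega)⟩
        · left
          by_contra hne
          have k1 := key (T.entry (0, j) + 1) (by omega) (by omega)
          have k2 := key (T.entry (0, j) + 2) (by omega) (by omega)
          omega
      split_ifs at E <;> split_ifs <;> omega
  refine ⟨ha2, han, ?_⟩
  funext c
  obtain ⟨i, j⟩ := c
  by_cases hij : ((i : ℕ), (j : ℕ)) = ((1 : ℕ), (0 : ℕ))
  · rw [hij]; simp [rowTf]; rfl
  · rw [rowTf]
    simp only
    rw [if_neg hij]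
    by_cases hcell : i = 0 ∧ j + 1 < n
    · obtain ⟨rfl, hj⟩ := hcell
      rw [if_pos ⟨rfl, hj⟩]
      exact main j hj
    · rw [if_neg hcell]
      by_contra hne
      rcases (hsh (i, j)).mp hne with h' | h'
      · exact hcell h'
      · exact hij h'

lemma col_unique (n : ℕ) (hn : 4 ≤ n) (T : SYT n)
    (hsh : ∀ c : ℕ × ℕ, T.entry c ≠ 0 ↔ (c.2 = 0 ∧ c.1 + 1 < n) ∨ c = (0, 1)) :
    2 ≤ T.entry (0, 1) ∧ T.entry (0, 1) ≤ n ∧ T.entry = colTf n (T.entry (0, 1)) := by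
  set b := T.entry (0, 1) with hbb
  have hb0 : b ≠ 0 := (hsh (0, 1)).mpr (Or.inr rfl)
  have h00 : T.entry (0, 0) ≠ 0 := (hsh (0, 0)).mpr (Or.inl ⟨rfl, by omega⟩)
  have e00 : T.entry (0, 0) = 1 := by
    obtain ⟨c, hc⟩ := T.exists_cell 1 le_rfl (by omega)
    have hcne : T.entry c ≠ 0 := by rw [hc]; omega
    rcases (hsh c).mp hcne with ⟨hc1, _⟩ | hc10
    · have hcc : ((0 : ℕ) + c.1, (0 : ℕ)) = c := by
        rw [Prod.ext_iff]; exact ⟨by simp, hc1.symm⟩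
      have := T.col_le 0 0 c.1 (by rw [hcc]; exact hcne)
      rw [hcc, hc] at this
      omega
    · rw [hc10] at hc
      have := T.row_lt 0 0 (by rw [hc]; omega)
      rw [hc] at this
      omega
  have hb2 : 2 ≤ b := by
    have h : T.entry (0, 0) < T.entry (0, 1) := T.row_lt 0 0 (by simpa using hb0)
    omega
  have hbn : b ≤ n := T.le_n _
  have main : ∀ i, i + 1 < n → T.entry (i, 0) = if b ≤ i + 1 then i + 2 else i + 1 := by
    intro i
    induction i with
    | zero => intro _; rw [e00, if_neg (by omega)]
    | succ i ih =>
      intro hi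
      have E := ih (by omega)
      have hF0 : T.entry (i + 1, 0) ≠ 0 := (hsh _).mpr (Or.inl ⟨rfl, by omega⟩)
      have hFn : T.entry (i + 1, 0) ≤ n := T.le_n _
      have hEF : T.entry (i, 0) < T.entry (i + 1, 0) := T.col_lt i 0 hF0
      have hFb : T.entry (i + 1, 0) ≠ b := by
        intro hh
        have := T.inj (i + 1, 0) (0, 1) hF0 (by rw [hh])
        simp at this
      have key : ∀ v, T.entry (i, 0) < v → v < T.entry (i + 1, 0) → v = b := by
        intro v hv1 hv2
        obtain ⟨c, hc⟩ := T.exists_cell v (by omega) (by omega)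
        have hcne : T.entry c ≠ 0 := by rw [hc]; omega
        rcases (hsh c).mp hcne with ⟨hc1, _⟩ | hc10
        · exfalso
          by_cases hle : c.1 ≤ i
          · have hcc : ((c.1 + (i - c.1) : ℕ), (0 : ℕ)) = ((i : ℕ), (0 : ℕ)) := by
              rw [Prod.ext_iff]; exact ⟨by omega, rfl⟩
            have h2 := T.col_le c.1 0 (i - c.1) (by rw [hcc]; exact (hsh _).mpr (Or.inl ⟨rfl, by omega⟩))
            rw [hcc] at h2
            have hcv : T.entry (c.1, 0) = v := by
              rw [← hc]; congr 1; rw [Prod.ext_iff]; exact ⟨rfl, hc1.symm⟩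
            omega
          · have hcc : (((i + 1) + (c.1 - (i + 1)) : ℕ), (0 : ℕ)) = c := by
              rw [Prod.ext_iff]; exact ⟨by omega, hc1.symm⟩
            have h2 := T.col_le (i + 1) 0 (c.1 - (i + 1)) (by rw [hcc]; exact hcne)
            rw [hcc, hc] at h2
            omega
        · rw [hc10] at hc; exact hc.symm
      have hsplit : T.entry (i + 1, 0) = T.entry (i, 0) + 1 ∨
          (T.entry (i + 1, 0) = T.entry (i, 0) + 2 ∧ T.entry (i, 0) + 1 = b) := by
        by_cases hh : T.entry (i + 1, 0) = T.entry (i, 0) + 2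
        · exact Or.inr ⟨hh, key _ (by omega) (by omega)⟩
        · left
          by_contra hne
          have k1 := key (T.entry (i, 0) + 1) (by omega) (by omega)
          have k2 := key (T.entry (i, 0) + 2) (by omega) (by omega)
          omega
      split_ifs at E <;> split_ifs <;> omega
  refine ⟨hb2, hbn, ?_⟩
  funext c
  obtain ⟨i, j⟩ := c
  by_cases hij : ((i : ℕ), (j : ℕ)) = ((0 : ℕ), (1 : ℕ))
  · rw [hij]; simp [colTf]; rfl
  · rw [colTf]
    simp only
    rw [if_neg hij]
    by_cases hcell : j = 0 ∧ i + 1 < n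
    · obtain ⟨rfl, hi⟩ := hcell
      rw [if_pos ⟨rfl, hi⟩]
      exact main i hi
    · rw [if_neg hcell]
      by_contra hne
      rcases (hsh (i, j)).mp hne with h' | h'
      · exact hcell h'
      · exact hij h'

/-! ### jdt slide computations -/

lemma jdtAux_succ (fuel : ℕ) (f : ℕ × ℕ → ℕ) (c : ℕ × ℕ) :
    jdtAux (fuel + 1) f c =
      if f (c.1, c.2 + 1) = 0 ∧ f (c.1 + 1, c.2) = 0 then f
      else if f (c.1 + 1, c.2) = 0 ∨ (f (c.1, c.2 + 1) ≠ 0 ∧ f (c.1, c.2 + 1) < f (c.1 + 1, c.2)) then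
        jdtAux fuel (Function.update (Function.update f c (f (c.1, c.2 + 1))) (c.1, c.2 + 1) 0) (c.1, c.2 + 1)
      else jdtAux fuel (Function.update (Function.update f c (f (c.1 + 1, c.2))) (c.1 + 1, c.2) 0) (c.1 + 1, c.2) := rfl

lemma jdt_row : ∀ (k fuel c : ℕ) (f : ℕ × ℕ → ℕ), k ≤ fuel → f (0, c) = 0 →
    (∀ j, f (1, c + j) = 0) →
    (∀ j, 1 ≤ j → j ≤ k → f (0, c + j) ≠ 0) →
    f (0, c + k + 1) = 0 →
    jdtAux fuel f (0, c) = fun x =>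
      if x.1 = 0 ∧ c ≤ x.2 ∧ x.2 ≤ c + k then (if x.2 < c + k then f (0, x.2 + 1) else 0)
      else f x := by
  intro k
  induction k with
  | zero =>
    intro fuel c f _ h1 h2 _ h4
    have hres : jdtAux fuel f (0, c) = f := by
      cases fuel with
      | zero => rfl
      | succ fuel =>
        rw [jdtAux_succ]
        rw [if_pos]
        constructor
        · simpa using h4
        · simpa using h2 0
    rw [hres]
    funext x
    obtain ⟨i, t⟩ := x
    simp only []
    split_ifs with hA hB
    · exact absurd hB (by omega)
    · obtain ⟨hi, ht1, ht2⟩ := hA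
      subst hi
      have ht : t = c := by omega
      subst ht
      exact h1
    · rfl
  | succ k ih =>
    intro fuel c f hfuel h1 h2 h3 h4
    cases fuel with
    | zero => omega
    | succ fuel =>
      rw [jdtAux_succ]
      have hr : f ((0 : ℕ), c + 1) ≠ 0 := by
        have := h3 1 le_rfl (by omega)
        simpa using this
      have hb : f ((0 : ℕ) + 1, c) = 0 := by simpa using h2 0
      rw [if_neg (by simp only; tauto), if_pos (by simp only; exact Or.inl hb)]
      simp only
      set f' := Function.update (Function.update f (0, c) (f (0, c + 1))) (0, c + 1) 0 with hf'
      have hkey : ∀ i t, f' (i, t) = if (i, t) = ((0 : ℕ), c + 1) then 0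
          else if (i, t) = ((0 : ℕ), c) then f (0, c + 1) else f (i, t) := by
        intro i t
        rw [hf', Function.update_apply, Function.update_apply]
      rw [ih fuel (c + 1) f' (by omega)
        (by rw [hkey]; simp)
        (by intro j; rw [hkey]; rw [if_neg (by simp), if_neg (by simp)]
            have := h2 (1 + j); rwa [show c + (1 + j) = c + 1 + j by omega] at this)
        (by intro j hj1 hj2; rw [hkey]; rw [if_neg (by simp; omega), if_neg (by simp; omega)]
            have := h3 (1 + j) (by omega) (by omega)
            rwa [show c + (1 + j) = c + 1 + j by omega] at this)
        (by rw [hkey]; rw [if_neg (by simp; omega), if_neg (by simp; omega)]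
            rwa [show c + 1 + k + 1 = c + (k + 1) + 1 by omega])]
      funext x
      obtain ⟨i, t⟩ := x
      simp only []
      rw [hkey 0 (t + 1), hkey i t]
      simp only [Prod.mk.injEq]
      split_ifs <;>
        first
          | rfl
          | (exfalso; omega)
          | (congr 2 <;> omega)


lemma jdt_col : ∀ (k fuel c : ℕ) (f : ℕ × ℕ → ℕ), k ≤ fuel → f (c, 0) = 0 →
    (∀ j, f (c + j, 1) = 0) →
    (∀ j, 1 ≤ j → j ≤ k → f (c + j, 0) ≠ 0) →
    f (c + k + 1, 0) = 0 →
    jdtAux fuel f (c, 0) = fun x =>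
      if x.2 = 0 ∧ c ≤ x.1 ∧ x.1 ≤ c + k then (if x.1 < c + k then f (x.1 + 1, 0) else 0)
      else f x := by
  intro k
  induction k with
  | zero =>
    intro fuel c f _ h1 h2 _ h4
    have hres : jdtAux fuel f (c, 0) = f := by
      cases fuel with
      | zero => rfl
      | succ fuel =>
        rw [jdtAux_succ]
        rw [if_pos]
        constructor
        · simpa using h2 0
        · simpa using h4
    rw [hres]
    funext x
    obtain ⟨t, j⟩ := x
    simp only []
    split_ifs with hA hB
    · exact absurd hB (by omega)
    · obtain ⟨hj, ht1, ht2⟩ := hA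
      subst hj
      have ht : t = c := by omega
      subst ht
      exact h1
    · rfl
  | succ k ih =>
    intro fuel c f hfuel h1 h2 h3 h4
    cases fuel with
    | zero => omega
    | succ fuel =>
      rw [jdtAux_succ]
      have hbne : f (c + 1, (0 : ℕ)) ≠ 0 := by
        have := h3 1 le_rfl (by omega)
        simpa using this
      have hrz : f (c, (0 : ℕ) + 1) = 0 := by simpa using h2 0
      rw [if_neg (by simp only; tauto), if_neg (by simp only; push_neg; exact ⟨fun hh => absurd hh hbne, fun hh => absurd hrz hh⟩)]
      simp only
      set f' := Function.update (Function.update f (c, 0) (f (c + 1, 0))) (c + 1, 0) 0 with hf'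
      have hkey : ∀ i t, f' (i, t) = if (i, t) = ((c + 1 : ℕ), (0 : ℕ)) then 0
          else if (i, t) = ((c : ℕ), (0 : ℕ)) then f (c + 1, 0) else f (i, t) := by
        intro i t
        rw [hf', Function.update_apply, Function.update_apply]
      rw [ih fuel (c + 1) f' (by omega)
        (by rw [hkey]; simp)
        (by intro j; rw [hkey]; rw [if_neg (by simp), if_neg (by simp)]
            have := h2 (1 + j); rwa [show c + (1 + j) = c + 1 + j by omega] at this)
        (by intro j hj1 hj2; rw [hkey]; rw [if_neg (by simp; omega), if_neg (by simp; omega)]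
            have := h3 (1 + j) (by omega) (by omega)
            rwa [show c + (1 + j) = c + 1 + j by omega] at this)
        (by rw [hkey]; rw [if_neg (by simp; omega), if_neg (by simp; omega)]
            rwa [show c + 1 + k + 1 = c + (k + 1) + 1 by omega])]
      funext x
      obtain ⟨t, j⟩ := x
      simp only []
      rw [hkey (t + 1) 0, hkey t j]
      simp only [Prod.mk.injEq]
      split_ifs <;>
        first
          | rfl
          | (exfalso; omega)
          | (congr 2 <;> omega)


/-! ### computing minors of the row hook -/

lemma jdtAux_succ' (fuel : ℕ) (f : ℕ × ℕ → ℕ) (i j : ℕ) :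
    jdtAux (fuel + 1) f (i, j) =
      if f (i, j + 1) = 0 ∧ f (i + 1, j) = 0 then f
      else if f (i + 1, j) = 0 ∨ (f (i, j + 1) ≠ 0 ∧ f (i, j + 1) < f (i + 1, j)) then
        jdtAux fuel (Function.update (Function.update f (i, j) (f (i, j + 1))) (i, j + 1) 0) (i, j + 1)
      else jdtAux fuel (Function.update (Function.update f (i, j) (f (i + 1, j))) (i + 1, j) 0) (i + 1, j) := rfl

lemma jdtAux_stop (fuel : ℕ) (f : ℕ × ℕ → ℕ) (i j : ℕ) (hr : f (i, j + 1) = 0)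
    (hb : f (i + 1, j) = 0) : jdtAux fuel f (i, j) = f := by
  cases fuel with
  | zero => rfl
  | succ fuel => rw [jdtAux_succ', if_pos ⟨hr, hb⟩]

lemma rowTf_at (n a jj : ℕ) (h : jj + 1 < n) :
    rowTf n a (0, jj) = if a ≤ jj + 1 then jj + 2 else jj + 1 := by
  rw [rowTf]
  simp only [Prod.mk.injEq, true_and, and_true, false_and, and_false, if_true, if_false]
  rw [if_neg (by omega), if_pos h]

lemma rowTf_corner (N x : ℕ) : rowTf N x (1, 0) = x := by
  rw [rowTf]
  simp only [Prod.mk.injEq, true_and, and_true, false_and, and_false, if_true, if_false]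

lemma rowOnly_corner (N : ℕ) : rowOnly N (1, 0) = 0 := by
  rw [rowOnly]
  simp only [Prod.mk.injEq, true_and, and_true, false_and, and_false, if_true, if_false]
  rw [if_neg (by omega)]

lemma colTf_at (n b ii : ℕ) (h : ii + 1 < n) :
    colTf n b (ii, 0) = if b ≤ ii + 1 then ii + 2 else ii + 1 := by
  rw [colTf]
  simp only [Prod.mk.injEq, true_and, and_true, false_and, and_false, if_true, if_false]
  rw [if_neg (by omega), if_pos h]

lemma colTf_corner (N x : ℕ) : colTf N x (0, 1) = x := by
  rw [colTf]
  simp only [Prod.mk.injEq, true_and, and_true, false_and, and_false, if_true, if_false]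

lemma colOnly_corner (N : ℕ) : colOnly N (0, 1) = 0 := by
  rw [colOnly]
  simp only [Prod.mk.injEq, true_and, and_true, false_and, and_false, if_true, if_false]
  rw [if_neg (by omega)]

set_option maxHeartbeats 1600000 in
lemma del_rowTf (n a m : ℕ) (hn : 4 ≤ n) (T : SYT n) (hT : T.entry = rowTf n a)
    (ha2 : 2 ≤ a) (han : a ≤ n) (hm1 : 1 ≤ m) (hmn : m ≤ n) :
    T.del m = if m = a ∨ (a = 2 ∧ m = 1) then rowOnly (n - 1)
      else if m < a then rowTf (n - 1) (a - 1) else rowTf (n - 1) a := by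
  rcases eq_or_ne m a with rfl | hma
  · -- delete the cell (1,0)
    rw [if_pos (Or.inl rfl)]
    rw [T.del_eq m (1, 0) (by omega) (by rw [hT, rowTf_corner])]
    rw [jdtAux_stop n _ 1 0
      (by rw [hT, Function.update_of_ne (by simp only [Ne, Prod.mk.injEq]; omega), rowTf]
          simp only [Prod.mk.injEq]
          rw [if_neg (by omega), if_neg (by omega)])
      (by rw [hT, Function.update_of_ne (by simp only [Ne, Prod.mk.injEq]; omega), rowTf]
          simp only [Prod.mk.injEq]
          rw [if_neg (by omega), if_neg (by omega)])]
    funext x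
    obtain ⟨i, j⟩ := x
    simp only [hT, Function.update_apply, rowTf, rowOnly, Prod.mk.injEq, true_and, and_true, false_and, and_false, if_true, if_false]
    split_ifs <;> first | omega | (exfalso; tauto)
  · rcases eq_or_ne m 1 with rfl | hm1'
    · -- delete the entry 1, at cell (0,0)
      have hcell : T.entry (0, 0) = 1 := by
        rw [hT, rowTf_at n a 0 (by omega), if_neg (by omega)]
      rw [T.del_eq 1 (0, 0) (by omega) hcell, hT]
      obtain ⟨fl, hfl⟩ : ∃ fl, n = fl + 1 := ⟨n - 1, by omega⟩
      rcases eq_or_ne a 2 with rfl | ha3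
      · -- a = 2 : slide down
        rw [if_pos (Or.inr ⟨rfl, rfl⟩)]
        rw [hfl, jdtAux_succ']
        have hr : Function.update (rowTf (fl + 1) 2) (0, 0) 0 ((0 : ℕ), 0 + 1) = 3 := by
          rw [Function.update_of_ne (by simp only [Ne, Prod.mk.injEq]; omega),
            rowTf_at _ _ _ (by omega), if_pos (by omega)]
        have hb : Function.update (rowTf (fl + 1) 2) (0, 0) 0 ((0 : ℕ) + 1, 0) = 2 := by
          rw [Function.update_of_ne (by simp only [Ne, Prod.mk.injEq]; omega)]
          show rowTf (fl + 1) 2 (1, 0) = 2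
          rw [rowTf_corner]
        rw [hr, hb, if_neg (by omega), if_neg (by omega)]
        rw [jdtAux_stop fl _ (0 + 1) 0
          (by rw [Function.update_of_ne (by simp only [Ne, Prod.mk.injEq]; omega),
                Function.update_of_ne (by simp only [Ne, Prod.mk.injEq]; omega),
                Function.update_of_ne (by simp only [Ne, Prod.mk.injEq]; omega), rowTf]
              simp only [Prod.mk.injEq]
              rw [if_neg (by omega), if_neg (by omega)])
          (by rw [Function.update_of_ne (by simp only [Ne, Prod.mk.injEq]; omega),
                Function.update_of_ne (by simp only [Ne, Prod.mk.injEq]; omega),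
                Function.update_of_ne (by simp only [Ne, Prod.mk.injEq]; omega), rowTf]
              simp only [Prod.mk.injEq]
              rw [if_neg (by omega), if_neg (by omega)])]
        funext x
        obtain ⟨i, j⟩ := x
        simp only [Function.update_apply, rowTf, rowOnly, Prod.mk.injEq, true_and, and_true, false_and, and_false, if_true, if_false]
        split_ifs <;> first | omega | (exfalso; tauto)
      · -- a ≥ 3 : slide right
        have ha3' : 3 ≤ a := by omega
        rw [if_neg (by omega), if_pos (by omega)]
        rw [hfl, jdtAux_succ']
        have hr : Function.update (rowTf (fl + 1) a) (0, 0) 0 ((0 : ℕ), 0 + 1) = 2 := by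
          rw [Function.update_of_ne (by simp only [Ne, Prod.mk.injEq]; omega),
            rowTf_at _ _ _ (by omega), if_neg (by omega)]
        have hb : Function.update (rowTf (fl + 1) a) (0, 0) 0 ((0 : ℕ) + 1, 0) = a := by
          rw [Function.update_of_ne (by simp only [Ne, Prod.mk.injEq]; omega)]
          show rowTf (fl + 1) a (1, 0) = a
          rw [rowTf_corner]
        rw [hr, hb, if_neg (by omega), if_pos (Or.inr ⟨by omega, by omega⟩)]
        rw [jdt_row (fl + 1 - 3) fl (0 + 1) _ (by omega)
          (by rw [Function.update_self])
          (by intro j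
              rw [Function.update_of_ne (by simp only [Ne, Prod.mk.injEq]; omega),
                Function.update_of_ne (by simp only [Ne, Prod.mk.injEq]; omega),
                Function.update_of_ne (by simp only [Ne, Prod.mk.injEq]; omega), rowTf]
              simp only [Prod.mk.injEq]
              rw [if_neg (by omega), if_neg (by omega)])
          (by intro j hj1 hj2
              rw [Function.update_of_ne (by simp only [Ne, Prod.mk.injEq]; omega),
                Function.update_of_ne (by simp only [Ne, Prod.mk.injEq]; omega),
                Function.update_of_ne (by simp only [Ne, Prod.mk.injEq]; omega),
                rowTf_at _ _ _ (by omega)]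
              split_ifs <;> first | omega | (exfalso; tauto))
          (by rw [Function.update_of_ne (by simp only [Ne, Prod.mk.injEq]; omega),
                Function.update_of_ne (by simp only [Ne, Prod.mk.injEq]; omega),
                Function.update_of_ne (by simp only [Ne, Prod.mk.injEq]; omega), rowTf]
              simp only [Prod.mk.injEq]
              rw [if_neg (by omega), if_neg (by omega)])]
        funext x
        obtain ⟨i, j⟩ := x
        simp only [Function.update_apply, rowTf, Prod.mk.injEq, true_and, and_true, false_and, and_false, if_true, if_false]
        split_ifs <;> first | omega | (exfalso; tauto)
    · rcases Nat.lt_or_ge m a with hlt | hge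
      · -- 2 ≤ m < a : delete at (0, m-1), slide right
        rw [if_neg (by omega), if_pos hlt]
        have hcell : T.entry (0, m - 1) = m := by
          rw [hT, rowTf_at n a (m - 1) (by omega), if_neg (by omega)]
          omega
        rw [T.del_eq m (0, m - 1) (by omega) hcell, hT]
        rw [jdt_row (n - m - 1) n (m - 1) _ (by omega)
          (by rw [Function.update_self])
          (by intro j
              rw [Function.update_of_ne (by simp only [Ne, Prod.mk.injEq]; omega), rowTf]
              simp only [Prod.mk.injEq]
              rw [if_neg (by omega), if_neg (by omega)])
          (by intro j hj1 hj2
              rw [Function.update_of_ne (by simp only [Ne, Prod.mk.injEq]; omega),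
                rowTf_at _ _ _ (by omega)]
              split_ifs <;> first | omega | (exfalso; tauto))
          (by rw [Function.update_of_ne (by simp only [Ne, Prod.mk.injEq]; omega), rowTf]
              simp only [Prod.mk.injEq]
              rw [if_neg (by omega), if_neg (by omega)])]
        funext x
        obtain ⟨i, j⟩ := x
        simp only [Function.update_apply, rowTf, Prod.mk.injEq, true_and, and_true, false_and, and_false, if_true, if_false]
        split_ifs <;> first | omega | (exfalso; tauto)
      · -- m > a : delete at (0, m-2), slide right
        have hgt : a < m := by omega
        rw [if_neg (by omega), if_neg (by omega)]
        have hcell : T.entry (0, m - 2) = m := by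
          rw [hT, rowTf_at n a (m - 2) (by omega), if_pos (by omega)]
          omega
        rw [T.del_eq m (0, m - 2) (by omega) hcell, hT]
        rw [jdt_row (n - m) n (m - 2) _ (by omega)
          (by rw [Function.update_self])
          (by intro j
              rw [Function.update_of_ne (by simp only [Ne, Prod.mk.injEq]; omega), rowTf]
              simp only [Prod.mk.injEq]
              rw [if_neg (by omega), if_neg (by omega)])
          (by intro j hj1 hj2
              rw [Function.update_of_ne (by simp only [Ne, Prod.mk.injEq]; omega),
                rowTf_at _ _ _ (by omega)]
              split_ifs <;> first | omega | (exfalso; tauto))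
          (by rw [Function.update_of_ne (by simp only [Ne, Prod.mk.injEq]; omega), rowTf]
              simp only [Prod.mk.injEq]
              rw [if_neg (by omega), if_neg (by omega)])]
        funext x
        obtain ⟨i, j⟩ := x
        simp only [Function.update_apply, rowTf, Prod.mk.injEq, true_and, and_true, false_and, and_false, if_true, if_false]
        split_ifs <;> first | omega | (exfalso; tauto)

/-! ### computing minors of the column hook -/

set_option maxHeartbeats 1600000 in
lemma del_colTf (n b m : ℕ) (hn : 4 ≤ n) (T : SYT n) (hT : T.entry = colTf n b)
    (hb2 : 2 ≤ b) (hbn : b ≤ n) (hm1 : 1 ≤ m) (hmn : m ≤ n) :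
    T.del m = if m = b ∨ (b = 2 ∧ m = 1) then colOnly (n - 1)
      else if m < b then colTf (n - 1) (b - 1) else colTf (n - 1) b := by
  rcases eq_or_ne m b with rfl | hmb
  · -- delete the cell (0,1)
    rw [if_pos (Or.inl rfl)]
    rw [T.del_eq m (0, 1) (by omega) (by rw [hT, colTf_corner])]
    rw [jdtAux_stop n _ 0 1
      (by rw [hT, Function.update_of_ne (by simp only [Ne, Prod.mk.injEq]; omega), colTf]
          simp only [Prod.mk.injEq]
          rw [if_neg (by omega), if_neg (by omega)])
      (by rw [hT, Function.update_of_ne (by simp only [Ne, Prod.mk.injEq]; omega), colTf]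
          simp only [Prod.mk.injEq]
          rw [if_neg (by omega), if_neg (by omega)])]
    funext x
    obtain ⟨i, j⟩ := x
    simp only [hT, Function.update_apply, colTf, colOnly, Prod.mk.injEq, true_and, and_true,
      false_and, and_false, if_true, if_false]
    split_ifs <;> first | omega | (exfalso; tauto)
  · rcases eq_or_ne m 1 with rfl | hm1'
    · -- delete the entry 1, at cell (0,0)
      have hcell : T.entry (0, 0) = 1 := by
        rw [hT, colTf_at n b 0 (by omega), if_neg (by omega)]
      rw [T.del_eq 1 (0, 0) (by omega) hcell, hT]
      obtain ⟨fl, hfl⟩ : ∃ fl, n = fl + 1 := ⟨n - 1, by omega⟩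
      rcases eq_or_ne b 2 with rfl | hb3
      · -- b = 2 : slide right
        rw [if_pos (Or.inr ⟨rfl, rfl⟩)]
        rw [hfl, jdtAux_succ']
        have hr : Function.update (colTf (fl + 1) 2) (0, 0) 0 ((0 : ℕ), 0 + 1) = 2 := by
          rw [Function.update_of_ne (by simp only [Ne, Prod.mk.injEq]; omega)]
          show colTf (fl + 1) 2 (0, 1) = 2
          rw [colTf_corner]
        have hbl : Function.update (colTf (fl + 1) 2) (0, 0) 0 ((0 : ℕ) + 1, 0) = 3 := by
          rw [Function.update_of_ne (by simp only [Ne, Prod.mk.injEq]; omega),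
            colTf_at _ _ _ (by omega), if_pos (by omega)]
        rw [hr, hbl, if_neg (by omega), if_pos (Or.inr ⟨by omega, by omega⟩)]
        rw [jdtAux_stop fl _ 0 (0 + 1)
          (by rw [Function.update_of_ne (by simp only [Ne, Prod.mk.injEq]; omega),
                Function.update_of_ne (by simp only [Ne, Prod.mk.injEq]; omega),
                Function.update_of_ne (by simp only [Ne, Prod.mk.injEq]; omega), colTf]
              simp only [Prod.mk.injEq]
              rw [if_neg (by omega), if_neg (by omega)])
          (by rw [Function.update_of_ne (by simp only [Ne, Prod.mk.injEq]; omega),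
                Function.update_of_ne (by simp only [Ne, Prod.mk.injEq]; omega),
                Function.update_of_ne (by simp only [Ne, Prod.mk.injEq]; omega), colTf]
              simp only [Prod.mk.injEq]
              rw [if_neg (by omega), if_neg (by omega)])]
        funext x
        obtain ⟨i, j⟩ := x
        simp only [Function.update_apply, colTf, colOnly, Prod.mk.injEq, true_and, and_true,
          false_and, and_false, if_true, if_false]
        split_ifs <;> first | omega | (exfalso; tauto)
      · -- b ≥ 3 : slide up the column
        have hb3' : 3 ≤ b := by omega
        rw [if_neg (by omega), if_pos (by omega)]
        rw [hfl, jdtAux_succ']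
        have hr : Function.update (colTf (fl + 1) b) (0, 0) 0 ((0 : ℕ), 0 + 1) = b := by
          rw [Function.update_of_ne (by simp only [Ne, Prod.mk.injEq]; omega)]
          show colTf (fl + 1) b (0, 1) = b
          rw [colTf_corner]
        have hbl : Function.update (colTf (fl + 1) b) (0, 0) 0 ((0 : ℕ) + 1, 0) = 2 := by
          rw [Function.update_of_ne (by simp only [Ne, Prod.mk.injEq]; omega),
            colTf_at _ _ _ (by omega), if_neg (by omega)]
        rw [hr, hbl, if_neg (by omega), if_neg (by omega)]
        rw [jdt_col (fl + 1 - 3) fl (0 + 1) _ (by omega)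
          (by rw [Function.update_self])
          (by intro j
              rw [Function.update_of_ne (by simp only [Ne, Prod.mk.injEq]; omega),
                Function.update_of_ne (by simp only [Ne, Prod.mk.injEq]; omega),
                Function.update_of_ne (by simp only [Ne, Prod.mk.injEq]; omega), colTf]
              simp only [Prod.mk.injEq]
              rw [if_neg (by omega), if_neg (by omega)])
          (by intro j hj1 hj2
              rw [Function.update_of_ne (by simp only [Ne, Prod.mk.injEq]; omega),
                Function.update_of_ne (by simp only [Ne, Prod.mk.injEq]; omega),
                Function.update_of_ne (by simp only [Ne, Prod.mk.injEq]; omega),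
                colTf_at _ _ _ (by omega)]
              split_ifs <;> first | omega | (exfalso; tauto))
          (by rw [Function.update_of_ne (by simp only [Ne, Prod.mk.injEq]; omega),
                Function.update_of_ne (by simp only [Ne, Prod.mk.injEq]; omega),
                Function.update_of_ne (by simp only [Ne, Prod.mk.injEq]; omega), colTf]
              simp only [Prod.mk.injEq]
              rw [if_neg (by omega), if_neg (by omega)])]
        funext x
        obtain ⟨i, j⟩ := x
        simp only [Function.update_apply, colTf, Prod.mk.injEq, true_and, and_true,
          false_and, and_false, if_true, if_false]
        split_ifs <;> first | omega | (exfalso; tauto)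
    · rcases Nat.lt_or_ge m b with hlt | hge
      · -- 2 ≤ m < b : delete at (m-1, 0), slide up
        rw [if_neg (by omega), if_pos hlt]
        have hcell : T.entry (m - 1, 0) = m := by
          rw [hT, colTf_at n b (m - 1) (by omega), if_neg (by omega)]
          omega
        rw [T.del_eq m (m - 1, 0) (by omega) hcell, hT]
        rw [jdt_col (n - m - 1) n (m - 1) _ (by omega)
          (by rw [Function.update_self])
          (by intro j
              rw [Function.update_of_ne (by simp only [Ne, Prod.mk.injEq]; omega), colTf]
              simp only [Prod.mk.injEq]
              rw [if_neg (by omega), if_neg (by omega)])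
          (by intro j hj1 hj2
              rw [Function.update_of_ne (by simp only [Ne, Prod.mk.injEq]; omega),
                colTf_at _ _ _ (by omega)]
              split_ifs <;> first | omega | (exfalso; tauto))
          (by rw [Function.update_of_ne (by simp only [Ne, Prod.mk.injEq]; omega), colTf]
              simp only [Prod.mk.injEq]
              rw [if_neg (by omega), if_neg (by omega)])]
        funext x
        obtain ⟨i, j⟩ := x
        simp only [Function.update_apply, colTf, Prod.mk.injEq, true_and, and_true,
          false_and, and_false, if_true, if_false]
        split_ifs <;> first | omega | (exfalso; tauto)
      · -- m > b : delete at (m-2, 0), slide up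
        have hgt : b < m := by omega
        rw [if_neg (by omega), if_neg (by omega)]
        have hcell : T.entry (m - 2, 0) = m := by
          rw [hT, colTf_at n b (m - 2) (by omega), if_pos (by omega)]
          omega
        rw [T.del_eq m (m - 2, 0) (by omega) hcell, hT]
        rw [jdt_col (n - m) n (m - 2) _ (by omega)
          (by rw [Function.update_self])
          (by intro j
              rw [Function.update_of_ne (by simp only [Ne, Prod.mk.injEq]; omega), colTf]
              simp only [Prod.mk.injEq]
              rw [if_neg (by omega), if_neg (by omega)])
          (by intro j hj1 hj2
              rw [Function.update_of_ne (by simp only [Ne, Prod.mk.injEq]; omega),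
                colTf_at _ _ _ (by omega)]
              split_ifs <;> first | omega | (exfalso; tauto))
          (by rw [Function.update_of_ne (by simp only [Ne, Prod.mk.injEq]; omega), colTf]
              simp only [Prod.mk.injEq]
              rw [if_neg (by omega), if_neg (by omega)])]
        funext x
        obtain ⟨i, j⟩ := x
        simp only [Function.update_apply, colTf, Prod.mk.injEq, true_and, and_true,
          false_and, and_false, if_true, if_false]
        split_ifs <;> first | omega | (exfalso; tauto)

/-! ### pinning down the shape of a tableau -/

lemma shape_pin {n : ℕ} (S : SYT n) (F : Finset (ℕ × ℕ)) (hcard : F.card = n)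
    (hsub : ∀ x ∈ F, S.entry x ≠ 0) : ∀ x ∉ F, S.entry x = 0 := by
  have hinj : Set.InjOn S.entry F := fun x hx y hy hxy => S.inj x y (hsub x hx) hxy
  have h1 : F.image S.entry ⊆ Finset.Icc 1 n := by
    intro v hv
    obtain ⟨x, hx, rfl⟩ := Finset.mem_image.mp hv
    exact Finset.mem_Icc.mpr ⟨by have := hsub x hx; omega, S.le_n x⟩
  have h2 : F.image S.entry = Finset.Icc 1 n := by
    apply Finset.eq_of_subset_of_card_le h1
    rw [Finset.card_image_of_injOn hinj, hcard, Nat.card_Icc]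
    omega
  intro x hx
  by_contra hne
  have hv : S.entry x ∈ Finset.Icc 1 n := Finset.mem_Icc.mpr ⟨by omega, S.le_n x⟩
  rw [← h2] at hv
  obtain ⟨y, hy, hxy⟩ := Finset.mem_image.mp hv
  have := S.inj y x (hsub y hy) hxy
  subst this
  exact hx hy

def rowHookF (n : ℕ) : Finset (ℕ × ℕ) :=
  ((Finset.range (n - 1)).image fun j => ((0 : ℕ), j)) ∪ {((1 : ℕ), (0 : ℕ))}

def colHookF (n : ℕ) : Finset (ℕ × ℕ) :=
  ((Finset.range (n - 1)).image fun i => ((i : ℕ), (0 : ℕ))) ∪ {((0 : ℕ), (1 : ℕ))}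

lemma mem_rowHookF (n : ℕ) (c : ℕ × ℕ) :
    c ∈ rowHookF n ↔ (c.1 = 0 ∧ c.2 + 1 < n) ∨ c = (1, 0) := by
  obtain ⟨i, j⟩ := c
  rw [rowHookF, Finset.mem_union, Finset.mem_singleton]
  simp only [Finset.mem_image, Finset.mem_range, Prod.mk.injEq]
  constructor
  · rintro (⟨x, hx, hx0, hxj⟩ | ⟨h1, h2⟩)
    · exact Or.inl ⟨by omega, by omega⟩
    · exact Or.inr ⟨h1, h2⟩
  · rintro (⟨h1, h2⟩ | hh)
    · exact Or.inl ⟨j, by omega, h1.symm, rfl⟩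
    · exact Or.inr hh

lemma mem_colHookF (n : ℕ) (c : ℕ × ℕ) :
    c ∈ colHookF n ↔ (c.2 = 0 ∧ c.1 + 1 < n) ∨ c = (0, 1) := by
  obtain ⟨i, j⟩ := c
  rw [colHookF, Finset.mem_union, Finset.mem_singleton]
  simp only [Finset.mem_image, Finset.mem_range, Prod.mk.injEq]
  constructor
  · rintro (⟨x, hx, hx0, hxj⟩ | ⟨h1, h2⟩)
    · exact Or.inl ⟨by omega, by omega⟩
    · exact Or.inr ⟨h1, h2⟩
  · rintro (⟨h1, h2⟩ | hh)
    · exact Or.inl ⟨i, by omega, rfl, h1.symm⟩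
    · exact Or.inr hh

lemma card_rowHookF (n : ℕ) (hn : 1 ≤ n) : (rowHookF n).card = n := by
  rw [rowHookF, Finset.card_union_of_disjoint (by simp [Finset.disjoint_right])]
  rw [Finset.card_image_of_injective _ (fun x y hxy => by simpa using hxy),
    Finset.card_range, Finset.card_singleton]
  omega

lemma card_colHookF (n : ℕ) (hn : 1 ≤ n) : (colHookF n).card = n := by
  rw [colHookF, Finset.card_union_of_disjoint (by simp [Finset.disjoint_right])]
  rw [Finset.card_image_of_injective _ (fun x y hxy => by simpa using hxy),
    Finset.card_range, Finset.card_singleton]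
  omega

/-! ### determining the parameter from the minors -/

lemma row_param {n a a' : ℕ} (hn : 4 ≤ n) (S : SYT n) (hSe : S.entry = rowTf n a')
    (ha'2 : 2 ≤ a') (ha'n : a' ≤ n) (ha2 : 2 ≤ a)
    (hmem : rowTf (n - 1) a ∈ minors1 S) :
    a = a' ∨ (a = a' - 1 ∧ 3 ≤ a') := by
  obtain ⟨m', h1, h2, heq⟩ := hmem
  rw [del_rowTf n a' m' hn S hSe ha'2 ha'n h1 h2] at heq
  split_ifs at heq with hc1 hc2
  · have := congrFun heq (1, 0)
    rw [rowTf_corner, rowOnly_corner] at this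
    omega
  · have := congrFun heq (1, 0)
    rw [rowTf_corner, rowTf_corner] at this
    omega
  · have := congrFun heq (1, 0)
    rw [rowTf_corner, rowTf_corner] at this
    omega

lemma col_param {n b b' : ℕ} (hn : 4 ≤ n) (S : SYT n) (hSe : S.entry = colTf n b')
    (hb'2 : 2 ≤ b') (hb'n : b' ≤ n) (hb2 : 2 ≤ b)
    (hmem : colTf (n - 1) b ∈ minors1 S) :
    b = b' ∨ (b = b' - 1 ∧ 3 ≤ b') := by
  obtain ⟨m', h1, h2, heq⟩ := hmem
  rw [del_colTf n b' m' hn S hSe hb'2 hb'n h1 h2] at heq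
  split_ifs at heq with hc1 hc2
  · have := congrFun heq (0, 1)
    rw [colTf_corner, colOnly_corner] at this
    omega
  · have := congrFun heq (0, 1)
    rw [colTf_corner, colTf_corner] at this
    omega
  · have := congrFun heq (0, 1)
    rw [colTf_corner, colTf_corner] at this
    omega

lemma SYT.ext' {n : ℕ} {S T : SYT n} (h : S.entry = T.entry) : S = T := by
  cases S
  cases T
  simp only at h
  subst h
  rfl

/-- A standard Young tableau with `n ≥ 4` entries whose shape is `(n - 1, 1)`
or `(2, 1, 1, …, 1)` is reconstructible from its set of 1-minors. -/
theorem syt_near_row_or_column_reconstructible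
    (n : ℕ) (hn : 4 ≤ n) (T : SYT n)
    (hshape : T.shape = {c : ℕ × ℕ | (c.1 = 0 ∧ c.2 < n - 1) ∨ (c.1 = 1 ∧ c.2 = 0)} ∨
      T.shape = {c : ℕ × ℕ | (c.1 = 0 ∧ c.2 < 2) ∨ (c.2 = 0 ∧ c.1 < n - 1)})
    (S : SYT n) (h : minors1 S = minors1 T) : S = T := by
  rcases hshape with hsh | hsh
  · -- near-row shape (n-1, 1)
    have hshT : ∀ c : ℕ × ℕ, T.entry c ≠ 0 ↔ (c.1 = 0 ∧ c.2 + 1 < n) ∨ c = (1, 0) := by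
      intro c
      have hc := Set.ext_iff.mp hsh c
      simp only [SYT.shape, shapeOf, Set.mem_setOf_eq, Prod.ext_iff] at hc ⊢
      rw [hc]
      omega
    obtain ⟨ha2, han, hTe⟩ := row_unique n hn T hshT
    set a := T.entry (1, 0) with ha_def
    have hRT : rowOnly (n - 1) = T.del a := by
      rw [del_rowTf n a a hn T hTe ha2 han (by omega) han, if_pos (Or.inl rfl)]
    have hRmem : rowOnly (n - 1) ∈ minors1 S := by
      rw [h]; exact ⟨a, by omega, han, hRT⟩
    have hHmem : ∃ b, 2 ≤ b ∧ rowTf (n - 1) b ∈ minors1 S := by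
      rcases eq_or_ne a 2 with ha2' | hane
      · refine ⟨2, le_rfl, ?_⟩
        rw [h]
        exact ⟨n, by omega, le_rfl,
          by rw [del_rowTf n a n hn T hTe ha2 han (by omega) le_rfl,
            if_neg (by omega), if_neg (by omega), ha2']⟩
      · refine ⟨a - 1, by omega, ?_⟩
        rw [h]
        exact ⟨2, by omega, by omega,
          by rw [del_rowTf n a 2 hn T hTe ha2 han (by omega) (by omega),
            if_neg (by omega), if_pos (by omega)]⟩
    obtain ⟨m₁, _, _, hm₁⟩ := hRmem
    obtain ⟨b, hb2, m₂, _, _, hm₂⟩ := hHmem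
    have hnzrow : ∀ j, j + 1 < n → S.entry (0, j) ≠ 0 := by
      intro j hj
      apply del_shape S m₁
      rw [← hm₁, rowOnly]
      simp only
      rw [if_pos ⟨by trivial, by omega⟩]
      omega
    have hnz10 : S.entry (1, 0) ≠ 0 := by
      apply del_shape S m₂
      rw [← hm₂, rowTf_corner]
      omega
    have hpin := shape_pin S (rowHookF n) (card_rowHookF n (by omega)) (by
      intro x hx
      rcases (mem_rowHookF n x).mp hx with ⟨h1, h2⟩ | rfl
      · have hxx : x = (0, x.2) := Prod.ext_iff.mpr ⟨h1, rfl⟩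
        rw [hxx]
        exact hnzrow x.2 h2
      · exact hnz10)
    have hshS : ∀ c : ℕ × ℕ, S.entry c ≠ 0 ↔ (c.1 = 0 ∧ c.2 + 1 < n) ∨ c = (1, 0) := by
      intro c
      constructor
      · intro hc
        by_contra hcon
        exact hc (hpin c (fun hmem => hcon ((mem_rowHookF n c).mp hmem)))
      · intro hc
        rcases hc with ⟨h1, h2⟩ | rfl
        · have hxx : c = (0, c.2) := Prod.ext_iff.mpr ⟨h1, rfl⟩
          rw [hxx]
          exact hnzrow c.2 h2
        · exact hnz10
    obtain ⟨ha'2, ha'n, hSe⟩ := row_unique n hn S hshS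
    set a' := S.entry (1, 0) with ha'_def
    have key1 : a < n → (a = a' ∨ (a = a' - 1 ∧ 3 ≤ a')) := by
      intro hlt
      have hmem : rowTf (n - 1) a ∈ minors1 S := by
        rw [h]
        exact ⟨n, by omega, le_rfl,
          by rw [del_rowTf n a n hn T hTe ha2 han (by omega) le_rfl,
            if_neg (by omega), if_neg (by omega)]⟩
      exact row_param hn S hSe ha'2 ha'n ha2 hmem
    have key2 : a' < n → (a' = a ∨ (a' = a - 1 ∧ 3 ≤ a)) := by
      intro hlt
      have hmem : rowTf (n - 1) a' ∈ minors1 T := by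
        rw [← h]
        exact ⟨n, by omega, le_rfl,
          by rw [del_rowTf n a' n hn S hSe ha'2 ha'n (by omega) le_rfl,
            if_neg (by omega), if_neg (by omega)]⟩
      exact row_param hn T hTe ha2 han ha'2 hmem
    have key3 : 3 ≤ a' → rowTf (n - 1) (a' - 1) ∈ minors1 T := by
      intro h3
      rw [← h]
      exact ⟨2, by omega, by omega,
        by rw [del_rowTf n a' 2 hn S hSe ha'2 ha'n (by omega) (by omega),
          if_neg (by omega), if_pos (by omega)]⟩
    have key4 : 3 ≤ a → rowTf (n - 1) (a - 1) ∈ minors1 S := by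
      intro h3
      rw [h]
      exact ⟨2, by omega, by omega,
        by rw [del_rowTf n a 2 hn T hTe ha2 han (by omega) (by omega),
          if_neg (by omega), if_pos (by omega)]⟩
    have haa : a = a' := by
      rcases Nat.lt_or_ge a n with h1 | h1
      · rcases Nat.lt_or_ge a' n with h2 | h2
        · have := key1 h1
          have := key2 h2
          omega
        · have ha'n' : a' = n := by omega
          have hk := key1 h1
          have hcase : a = n - 1 ∧ 3 ≤ a := by omega
          have := row_param hn S hSe ha'2 ha'n (by omega : 2 ≤ a - 1) (key4 hcase.2)
          omega
      · rcases Nat.lt_or_ge a' n with h2 | h2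
        · have han' : a = n := by omega
          have hk := key2 h2
          have hcase : a' = n - 1 ∧ 3 ≤ a' := by omega
          have := row_param hn T hTe ha2 han (by omega : 2 ≤ a' - 1) (key3 hcase.2)
          omega
        · omega
    apply SYT.ext'
    rw [hSe, hTe, haa]
  · -- near-column shape (2, 1, ..., 1)
    have hshT : ∀ c : ℕ × ℕ, T.entry c ≠ 0 ↔ (c.2 = 0 ∧ c.1 + 1 < n) ∨ c = (0, 1) := by
      intro c
      have hc := Set.ext_iff.mp hsh c
      simp only [SYT.shape, shapeOf, Set.mem_setOf_eq, Prod.ext_iff] at hc ⊢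
      rw [hc]
      omega
    obtain ⟨ha2, han, hTe⟩ := col_unique n hn T hshT
    set a := T.entry (0, 1) with ha_def
    have hRT : colOnly (n - 1) = T.del a := by
      rw [del_colTf n a a hn T hTe ha2 han (by omega) han, if_pos (Or.inl rfl)]
    have hRmem : colOnly (n - 1) ∈ minors1 S := by
      rw [h]; exact ⟨a, by omega, han, hRT⟩
    have hHmem : ∃ b, 2 ≤ b ∧ colTf (n - 1) b ∈ minors1 S := by
      rcases eq_or_ne a 2 with ha2' | hane
      · refine ⟨2, le_rfl, ?_⟩
        rw [h]
        exact ⟨n, by omega, le_rfl,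
          by rw [del_colTf n a n hn T hTe ha2 han (by omega) le_rfl,
            if_neg (by omega), if_neg (by omega), ha2']⟩
      · refine ⟨a - 1, by omega, ?_⟩
        rw [h]
        exact ⟨2, by omega, by omega,
          by rw [del_colTf n a 2 hn T hTe ha2 han (by omega) (by omega),
            if_neg (by omega), if_pos (by omega)]⟩
    obtain ⟨m₁, _, _, hm₁⟩ := hRmem
    obtain ⟨b, hb2, m₂, _, _, hm₂⟩ := hHmem
    have hnzcol : ∀ i, i + 1 < n → S.entry (i, 0) ≠ 0 := by
      intro i hi
      apply del_shape S m₁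
      rw [← hm₁, colOnly]
      simp only
      rw [if_pos ⟨by trivial, by omega⟩]
      omega
    have hnz01 : S.entry (0, 1) ≠ 0 := by
      apply del_shape S m₂
      rw [← hm₂, colTf_corner]
      omega
    have hpin := shape_pin S (colHookF n) (card_colHookF n (by omega)) (by
      intro x hx
      rcases (mem_colHookF n x).mp hx with ⟨h1, h2⟩ | rfl
      · have hxx : x = (x.1, 0) := Prod.ext_iff.mpr ⟨rfl, h1⟩
        rw [hxx]
        exact hnzcol x.1 h2
      · exact hnz01)
    have hshS : ∀ c : ℕ × ℕ, S.entry c ≠ 0 ↔ (c.2 = 0 ∧ c.1 + 1 < n) ∨ c = (0, 1) := by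
      intro c
      constructor
      · intro hc
        by_contra hcon
        exact hc (hpin c (fun hmem => hcon ((mem_colHookF n c).mp hmem)))
      · intro hc
        rcases hc with ⟨h1, h2⟩ | rfl
        · have hxx : c = (c.1, 0) := Prod.ext_iff.mpr ⟨rfl, h1⟩
          rw [hxx]
          exact hnzcol c.1 h2
        · exact hnz01
    obtain ⟨ha'2, ha'n, hSe⟩ := col_unique n hn S hshS
    set a' := S.entry (0, 1) with ha'_def
    have key1 : a < n → (a = a' ∨ (a = a' - 1 ∧ 3 ≤ a')) := by
      intro hlt
      have hmem : colTf (n - 1) a ∈ minors1 S := by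
        rw [h]
        exact ⟨n, by omega, le_rfl,
          by rw [del_colTf n a n hn T hTe ha2 han (by omega) le_rfl,
            if_neg (by omega), if_neg (by omega)]⟩
      exact col_param hn S hSe ha'2 ha'n ha2 hmem
    have key2 : a' < n → (a' = a ∨ (a' = a - 1 ∧ 3 ≤ a)) := by
      intro hlt
      have hmem : colTf (n - 1) a' ∈ minors1 T := by
        rw [← h]
        exact ⟨n, by omega, le_rfl,
          by rw [del_colTf n a' n hn S hSe ha'2 ha'n (by omega) le_rfl,
            if_neg (by omega), if_neg (by omega)]⟩
      exact col_param hn T hTe ha2 han ha'2 hmem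
    have key3 : 3 ≤ a' → colTf (n - 1) (a' - 1) ∈ minors1 T := by
      intro h3
      rw [← h]
      exact ⟨2, by omega, by omega,
        by rw [del_colTf n a' 2 hn S hSe ha'2 ha'n (by omega) (by omega),
          if_neg (by omega), if_pos (by omega)]⟩
    have key4 : 3 ≤ a → colTf (n - 1) (a - 1) ∈ minors1 S := by
      intro h3
      rw [h]
      exact ⟨2, by omega, by omega,
        by rw [del_colTf n a 2 hn T hTe ha2 han (by omega) (by omega),
          if_neg (by omega), if_pos (by omega)]⟩
    have haa : a = a' := by
      rcases Nat.lt_or_ge a n with h1 | h1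
      · rcases Nat.lt_or_ge a' n with h2 | h2
        · have := key1 h1
          have := key2 h2
          omega
        · have ha'n' : a' = n := by omega
          have hk := key1 h1
          have hcase : a = n - 1 ∧ 3 ≤ a := by omega
          have := col_param hn S hSe ha'2 ha'n (by omega : 2 ≤ a - 1) (key4 hcase.2)
          omega
      · rcases Nat.lt_or_ge a' n with h2 | h2
        · have han' : a = n := by omega
          have hk := key2 h2
          have hcase : a' = n - 1 ∧ 3 ≤ a' := by omega
          have := col_param hn T hTe ha2 han (by omega : 2 ≤ a' - 1) (key3 hcase.2)
          omega
        · omega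
    apply SYT.ext'
    rw [hSe, hTe, haa]
end

section
/- The two standard Young tableaux of shape (2,1) — the one with first row (1,2) and second row (3), and the one with first row (1,3) and second row (2) — are distinct but have equal sets of 1-minors; each set consists of the single-row tableau with entries (1,2) and the single-column tableau with entries 1 above 2. Hence tableaux with 3 entries of shape (2,1) are not reconstructible from their sets of 1-minors. -/
open Classical

/-! ### Auxiliary definitions and lemmas for the proof -/

private def e1 : ℕ × ℕ → ℕ := fun c => if c = (0,0) then 1 else if c = (0,1) then 2
  else if c = (1,0) then 3 else 0

private def e2 : ℕ × ℕ → ℕ := fun c => if c = (0,0) then 1 else if c = (0,1) then 3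
  else if c = (1,0) then 2 else 0

private def rowF : ℕ × ℕ → ℕ := fun c => if c = (0,0) then 1 else if c = (0,1) then 2 else 0
private def colF : ℕ × ℕ → ℕ := fun c => if c = (0,0) then 1 else if c = (1,0) then 2 else 0

private lemma e1_ne : ∀ i j : ℕ, e1 (i,j) ≠ 0 ↔ i + j ≤ 1 := by
  intro i j
  simp only [e1, Prod.mk.injEq]
  split_ifs <;> omega

private lemma e2_ne : ∀ i j : ℕ, e2 (i,j) ≠ 0 ↔ i + j ≤ 1 := by
  intro i j
  simp only [e2, Prod.mk.injEq]
  split_ifs <;> omega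

private lemma e1_mem (c : ℕ×ℕ) (h : e1 c ≠ 0) : c = (0,0) ∨ c = (0,1) ∨ c = (1,0) := by
  obtain ⟨i,j⟩ := c
  rw [e1_ne] at h
  simp only [Prod.mk.injEq]
  omega

private lemma e2_mem (c : ℕ×ℕ) (h : e2 c ≠ 0) : c = (0,0) ∨ c = (0,1) ∨ c = (1,0) := by
  obtain ⟨i,j⟩ := c
  rw [e2_ne] at h
  simp only [Prod.mk.injEq]
  omega

private noncomputable def T1 : SYT 3 where
  entry := e1
  diagram := by intro i j i' j' hi hj h; rw [e1_ne] at *; omega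
  le_n := by intro c; unfold e1; split_ifs <;> norm_num
  exists_cell := by
    intro k h1 h3
    interval_cases k
    · exact ⟨(0,0), rfl⟩
    · exact ⟨(0,1), rfl⟩
    · exact ⟨(1,0), rfl⟩
  inj := by
    intro c c' h he
    have hc := e1_mem c h
    have hc' := e1_mem c' (by rw [← he]; exact h)
    rcases hc with rfl|rfl|rfl <;> rcases hc' with rfl|rfl|rfl <;>
      first | rfl | (exact absurd he (by decide))
  row_lt := by
    intro i j h
    rcases e1_mem _ h with h'|h'|h' <;> (rw [Prod.mk.injEq] at h'; try omega)
    obtain ⟨rfl, hj⟩ := h'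
    have : j = 0 := by omega
    subst this; decide
  col_lt := by
    intro i j h
    rcases e1_mem _ h with h'|h'|h' <;> (rw [Prod.mk.injEq] at h'; try omega)
    obtain ⟨hi, rfl⟩ := h'
    have : i = 0 := by omega
    subst this; decide

private noncomputable def T2 : SYT 3 where
  entry := e2
  diagram := by intro i j i' j' hi hj h; rw [e2_ne] at *; omega
  le_n := by intro c; unfold e2; split_ifs <;> norm_num
  exists_cell := by
    intro k h1 h3
    interval_cases k
    · exact ⟨(0,0), rfl⟩
    · exact ⟨(1,0), rfl⟩
    · exact ⟨(0,1), rfl⟩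
  inj := by
    intro c c' h he
    have hc := e2_mem c h
    have hc' := e2_mem c' (by rw [← he]; exact h)
    rcases hc with rfl|rfl|rfl <;> rcases hc' with rfl|rfl|rfl <;>
      first | rfl | (exact absurd he (by decide))
  row_lt := by
    intro i j h
    rcases e2_mem _ h with h'|h'|h' <;> (rw [Prod.mk.injEq] at h'; try omega)
    obtain ⟨rfl, hj⟩ := h'
    have : j = 0 := by omega
    subst this; decide
  col_lt := by
    intro i j h
    rcases e2_mem _ h with h'|h'|h' <;> (rw [Prod.mk.injEq] at h'; try omega)
    obtain ⟨hi, rfl⟩ := h'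
    have : i = 0 := by omega
    subst this; decide

private lemma delRaw_spec (fuel : ℕ) (f : ℕ×ℕ→ℕ) (m : ℕ) (c₀ : ℕ×ℕ)
    (hm : 0 < m) (h0 : f c₀ = m) (huniq : ∀ c, f c = m → c = c₀) :
    delRaw fuel f m = fun x =>
      if m < jdtAux fuel (Function.update f c₀ 0) c₀ x
      then jdtAux fuel (Function.update f c₀ 0) c₀ x - 1
      else jdtAux fuel (Function.update f c₀ 0) c₀ x := by
  have h : 0 < m ∧ ∃ c, f c = m := ⟨hm, c₀, h0⟩
  have hc : Classical.choose h.2 = c₀ := huniq _ (Classical.choose_spec h.2)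
  rw [delRaw, dif_pos h, hc]

private lemma e1_uniq (m : ℕ) (c₀ : ℕ×ℕ) (h0 : e1 c₀ = m) (hm : 0 < m) :
    ∀ c, e1 c = m → c = c₀ := by
  intro c h
  have h1 : e1 c ≠ 0 := by omega
  have h2 : e1 c₀ ≠ 0 := by omega
  rcases e1_mem c h1 with rfl|rfl|rfl <;> rcases e1_mem c₀ h2 with rfl|rfl|rfl <;>
    first | rfl | (exfalso; rw [← h0] at h; revert h; decide)

private lemma e2_uniq (m : ℕ) (c₀ : ℕ×ℕ) (h0 : e2 c₀ = m) (hm : 0 < m) :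
    ∀ c, e2 c = m → c = c₀ := by
  intro c h
  have h1 : e2 c ≠ 0 := by omega
  have h2 : e2 c₀ ≠ 0 := by omega
  rcases e2_mem c h1 with rfl|rfl|rfl <;> rcases e2_mem c₀ h2 with rfl|rfl|rfl <;>
    first | rfl | (exfalso; rw [← h0] at h; revert h; decide)

-- jeu de taquin computations
private lemma J11 : jdtAux 3 (Function.update e1 (0,0) 0) (0,0)
    = fun c => if c = (0,0) then 2 else if c = (1,0) then 3 else 0 := by
  rw [show (3:ℕ) = 2+1 from rfl, jdtAux]
  norm_num [Function.update_apply, e1]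
  rw [show (2:ℕ) = 1+1 from rfl, jdtAux]
  norm_num [Function.update_apply, e1]
  funext c
  obtain ⟨i,j⟩ := c
  simp [Function.update_apply, e1, Prod.ext_iff]
  split_ifs <;> omega

private lemma J12 : jdtAux 3 (Function.update e1 (0,1) 0) (0,1)
    = fun c => if c = (0,0) then 1 else if c = (1,0) then 3 else 0 := by
  rw [show (3:ℕ) = 2+1 from rfl, jdtAux]
  norm_num [Function.update_apply, e1]
  funext c
  obtain ⟨i,j⟩ := c
  simp [Function.update_apply, e1, Prod.ext_iff]
  split_ifs <;> omega

private lemma J13 : jdtAux 3 (Function.update e1 (1,0) 0) (1,0)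
    = fun c => if c = (0,0) then 1 else if c = (0,1) then 2 else 0 := by
  rw [show (3:ℕ) = 2+1 from rfl, jdtAux]
  norm_num [Function.update_apply, e1]
  funext c
  obtain ⟨i,j⟩ := c
  simp [Function.update_apply, e1, Prod.ext_iff]
  split_ifs <;> omega

private lemma J21 : jdtAux 3 (Function.update e2 (0,0) 0) (0,0)
    = fun c => if c = (0,0) then 2 else if c = (0,1) then 3 else 0 := by
  rw [show (3:ℕ) = 2+1 from rfl, jdtAux]
  norm_num [Function.update_apply, e2]
  rw [show (2:ℕ) = 1+1 from rfl, jdtAux]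
  norm_num [Function.update_apply, e2]
  funext c
  obtain ⟨i,j⟩ := c
  simp [Function.update_apply, e2, Prod.ext_iff]
  split_ifs <;> omega

private lemma J22 : jdtAux 3 (Function.update e2 (1,0) 0) (1,0)
    = fun c => if c = (0,0) then 1 else if c = (0,1) then 3 else 0 := by
  rw [show (3:ℕ) = 2+1 from rfl, jdtAux]
  norm_num [Function.update_apply, e2]
  funext c
  obtain ⟨i,j⟩ := c
  simp [Function.update_apply, e2, Prod.ext_iff]
  split_ifs <;> omega

private lemma J23 : jdtAux 3 (Function.update e2 (0,1) 0) (0,1)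
    = fun c => if c = (0,0) then 1 else if c = (1,0) then 2 else 0 := by
  rw [show (3:ℕ) = 2+1 from rfl, jdtAux]
  norm_num [Function.update_apply, e2]
  funext c
  obtain ⟨i,j⟩ := c
  simp [Function.update_apply, e2, Prod.ext_iff]
  split_ifs <;> omega

private lemma del1_1 : T1.del 1 = colF := by
  show delRaw 3 e1 1 = colF
  rw [delRaw_spec 3 e1 1 (0,0) (by norm_num) (by decide) (e1_uniq 1 (0,0) (by decide) (by norm_num)), J11]
  funext c; obtain ⟨i,j⟩ := c
  simp only [colF, Prod.mk.injEq, Prod.ext_iff]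
  split_ifs <;> omega

private lemma del1_2 : T1.del 2 = colF := by
  show delRaw 3 e1 2 = colF
  rw [delRaw_spec 3 e1 2 (0,1) (by norm_num) (by decide) (e1_uniq 2 (0,1) (by decide) (by norm_num)), J12]
  funext c; obtain ⟨i,j⟩ := c
  simp only [colF, Prod.mk.injEq, Prod.ext_iff]
  split_ifs <;> omega

private lemma del1_3 : T1.del 3 = rowF := by
  show delRaw 3 e1 3 = rowF
  rw [delRaw_spec 3 e1 3 (1,0) (by norm_num) (by decide) (e1_uniq 3 (1,0) (by decide) (by norm_num)), J13]
  funext c; obtain ⟨i,j⟩ := c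
  simp only [rowF, Prod.mk.injEq, Prod.ext_iff]
  split_ifs <;> omega

private lemma del2_1 : T2.del 1 = rowF := by
  show delRaw 3 e2 1 = rowF
  rw [delRaw_spec 3 e2 1 (0,0) (by norm_num) (by decide) (e2_uniq 1 (0,0) (by decide) (by norm_num)), J21]
  funext c; obtain ⟨i,j⟩ := c
  simp only [rowF, Prod.mk.injEq, Prod.ext_iff]
  split_ifs <;> omega

private lemma del2_2 : T2.del 2 = rowF := by
  show delRaw 3 e2 2 = rowF
  rw [delRaw_spec 3 e2 2 (1,0) (by norm_num) (by decide) (e2_uniq 2 (1,0) (by decide) (by norm_num)), J22]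
  funext c; obtain ⟨i,j⟩ := c
  simp only [rowF, Prod.mk.injEq, Prod.ext_iff]
  split_ifs <;> omega

private lemma del2_3 : T2.del 3 = colF := by
  show delRaw 3 e2 3 = colF
  rw [delRaw_spec 3 e2 3 (0,1) (by norm_num) (by decide) (e2_uniq 3 (0,1) (by decide) (by norm_num)), J23]
  funext c; obtain ⟨i,j⟩ := c
  simp only [colF, Prod.mk.injEq, Prod.ext_iff]
  split_ifs <;> omega

private lemma minors1_T1 : minors1 T1 = {rowF, colF} := by
  ext g
  simp only [minors1, Set.mem_setOf_eq, Set.mem_insert_iff, Set.mem_singleton_iff]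
  constructor
  · rintro ⟨m, h1, h3, rfl⟩
    interval_cases m
    · right; exact del1_1
    · right; exact del1_2
    · left; exact del1_3
  · rintro (rfl|rfl)
    · exact ⟨3, by norm_num, by norm_num, del1_3.symm⟩
    · exact ⟨1, by norm_num, by norm_num, del1_1.symm⟩

private lemma minors1_T2 : minors1 T2 = {rowF, colF} := by
  ext g
  simp only [minors1, Set.mem_setOf_eq, Set.mem_insert_iff, Set.mem_singleton_iff]
  constructor
  · rintro ⟨m, h1, h3, rfl⟩
    interval_cases m
    · left; exact del2_1
    · left; exact del2_2
    · right; exact del2_3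
  · rintro (rfl|rfl)
    · exact ⟨1, by norm_num, by norm_num, del2_1.symm⟩
    · exact ⟨3, by norm_num, by norm_num, del2_3.symm⟩

/-- The two standard Young tableaux of shape `(2, 1)` -- with rows
`(1, 2), (3)` and `(1, 3), (2)` respectively -- are distinct but have equal
sets of 1-minors; each set consists of the single-row tableau with entries
`(1, 2)` and the single-column tableau with `1` above `2`.  Hence tableaux with
3 entries of shape `(2, 1)` are not reconstructible from their sets of
1-minors. -/
theorem syt_shape_21_not_set_reconstructible :
    ∃ T₁ T₂ : SYT 3,
      T₁.entry = (fun c : ℕ × ℕ => if c = (0, 0) then 1 else if c = (0, 1) then 2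
        else if c = (1, 0) then 3 else 0) ∧
      T₂.entry = (fun c : ℕ × ℕ => if c = (0, 0) then 1 else if c = (0, 1) then 3
        else if c = (1, 0) then 2 else 0) ∧
      T₁ ≠ T₂ ∧
      minors1 T₁ = minors1 T₂ ∧
      minors1 T₁ =
        {(fun c : ℕ × ℕ => if c = (0, 0) then 1 else if c = (0, 1) then 2 else 0),
         (fun c : ℕ × ℕ => if c = (0, 0) then 1 else if c = (1, 0) then 2 else 0)} := by
  refine ⟨T1, T2, rfl, rfl, ?_, ?_, ?_⟩
  · intro h
    exact absurd (congrFun (congrArg SYT.entry h) (0,1)) (by decide)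
  · rw [minors1_T1, minors1_T2]
  · exact minors1_T1
end

section
/- Let T be a standard Young tableau with n ≥ 2 entries having at least two outer corners. Then the Young diagram of the shape of T equals the union of the Young diagrams of the shapes of the 1-minors of T. -/
open Classical

lemma jdt_stop (fuel : ℕ) (f : ℕ × ℕ → ℕ) (c : ℕ × ℕ)
    (hr : f (c.1, c.2 + 1) = 0) (hb : f (c.1 + 1, c.2) = 0) :
    jdtAux fuel f c = f := by
  cases fuel <;> simp [jdtAux, hr, hb]

lemma jdt_support : ∀ (fuel : ℕ) (f : ℕ × ℕ → ℕ) (c x : ℕ × ℕ),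
    jdtAux fuel f c x ≠ 0 → f x ≠ 0 ∨ x = c := by
  intro fuel
  induction fuel with
  | zero => intro f c x hx; exact Or.inl hx
  | succ fuel ih =>
    intro f c x hx
    rw [jdtAux] at hx
    set r := f (c.1, c.2 + 1) with hr
    set b := f (c.1 + 1, c.2) with hb
    by_cases h0 : r = 0 ∧ b = 0
    · simp only [h0, if_true] at hx; exact Or.inl hx
    · simp only [h0, if_false] at hx
      by_cases h1 : b = 0 ∨ (r ≠ 0 ∧ r < b)
      · simp only [h1, if_true] at hx
        have hrne : r ≠ 0 := by
          rcases h1 with h1 | h1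
          · intro hr0; exact h0 ⟨hr0, h1⟩
          · exact h1.1
        rcases ih _ _ _ hx with h2 | h2
        · by_cases hxc : x = c
          · exact Or.inr hxc
          · by_cases hxc' : x = (c.1, c.2 + 1)
            · left; rw [hxc']; exact hrne
            · left
              rwa [Function.update_of_ne hxc', Function.update_of_ne hxc] at h2
        · left; rw [h2]; exact hrne
      · simp only [h1, if_false] at hx
        have hbne : b ≠ 0 := fun hb0 => h1 (Or.inl hb0)
        rcases ih _ _ _ hx with h2 | h2
        · by_cases hxc : x = c
          · exact Or.inr hxc
          · by_cases hxc' : x = (c.1 + 1, c.2)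
            · left; rw [hxc']; exact hbne
            · left
              rwa [Function.update_of_ne hxc', Function.update_of_ne hxc] at h2
        · left; rw [h2]; exact hbne

lemma del_support_subset {n : ℕ} (T : SYT n) (m : ℕ) (x : ℕ × ℕ)
    (hx : T.del m x ≠ 0) : T.entry x ≠ 0 := by
  unfold SYT.del delRaw at hx
  by_cases h : 0 < m ∧ ∃ c, T.entry c = m
  · rw [dif_pos h] at hx
    set c0 := Classical.choose h.2 with hc0
    have hc0e : T.entry c0 = m := Classical.choose_spec h.2
    have hg : jdtAux n (Function.update T.entry c0 0) c0 x ≠ 0 := by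
      intro h0; rw [h0] at hx; simp at hx
    rcases jdt_support n _ _ _ hg with h2 | h2
    · by_cases hxc : x = c0
      · rw [hxc, hc0e]; omega
      · rwa [Function.update_of_ne hxc] at h2
    · rw [h2, hc0e]; omega
  · rwa [dif_neg h] at hx

lemma del_corner {n : ℕ} (_hn : 1 ≤ n) (T : SYT n) (c : ℕ × ℕ)
    (hc : IsOuterCorner T.entry c) (x : ℕ × ℕ) (hxc : x ≠ c)
    (hx : T.entry x ≠ 0) : T.del (T.entry c) x ≠ 0 := by
  obtain ⟨hne, hr, hb⟩ := hc
  have h : 0 < T.entry c ∧ ∃ c', T.entry c' = T.entry c :=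
    ⟨Nat.pos_of_ne_zero hne, ⟨c, rfl⟩⟩
  have hch : Classical.choose h.2 = c :=
    T.inj _ _ (by rw [Classical.choose_spec h.2]; exact hne) (Classical.choose_spec h.2)
  unfold SYT.del delRaw
  rw [dif_pos h]
  simp only [hch]
  have hstop : jdtAux n (Function.update T.entry c 0) c = Function.update T.entry c 0 := by
    apply jdt_stop
    · rw [Function.update_of_ne (by simp [Prod.ext_iff])]; exact hr
    · rw [Function.update_of_ne (by simp [Prod.ext_iff])]; exact hb
  rw [hstop, Function.update_of_ne hxc]
  split <;> omega

/-- If a standard Young tableau `T` with `n ≥ 2` entries has at least two outer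
corners, then the Young diagram of its shape is the union of the Young diagrams
of the shapes of its 1-minors. -/
theorem syt_shape_eq_union_of_minor_shapes
    (n : ℕ) (hn : 2 ≤ n) (T : SYT n)
    (h : ∃ c c' : ℕ × ℕ, c ≠ c' ∧ IsOuterCorner T.entry c ∧ IsOuterCorner T.entry c') :
    T.shape = ⋃ g ∈ minors1 T, shapeOf g := by
  obtain ⟨c, c', hcc, hc, hc'⟩ := h
  ext x
  simp only [Set.mem_iUnion, minors1, Set.mem_setOf_eq]
  constructor
  · intro hx
    by_cases hxc : x = c
    · refine ⟨T.del (T.entry c'), ⟨T.entry c', Nat.one_le_iff_ne_zero.mpr hc'.1,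
        T.le_n c', rfl⟩, ?_⟩
      exact del_corner (by omega) T c' hc' x (by rw [hxc]; exact hcc) hx
    · refine ⟨T.del (T.entry c), ⟨T.entry c, Nat.one_le_iff_ne_zero.mpr hc.1,
        T.le_n c, rfl⟩, ?_⟩
      exact del_corner (by omega) T c hc x hxc hx
  · rintro ⟨g, ⟨m, _, _, rfl⟩, hx⟩
    exact del_support_subset T m x hx
end
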